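/- Fix α ∈ ℝ. On ℝ³ define γ̃^i_k(A) = δ^i_k − α·Σ_l ε^{ilk}·A_l + α²·A_i·A_k and ρ̃^i_a(A) = (1/(1 + α²·Z₁))·(δ^i_a − α·Σ_k ε^{ika}·A_k), where Z₁ = A_1² + A_2² + A_3². Then ρ̃ satisfies the second master equation of the linear Poisson gauge theory with γ̃ at every A ∈ ℝ³: Σ_l (γ̃^j_l(A)·∂^l_A ρ̃^i_a(A) + ρ̃^l_a(A)·∂^i_A γ̃^j_l(A)) = 0 for all i,j,a. -/

import Mathlib

/-- The totally antisymmetric Levi-Civita symbol on three indices with `ε^{123} = 1`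
(here indices run over `Fin 3`, i.e. `ε 0 1 2 = 1`). -/
noncomputable def levicivita (i j k : Fin 3) : ℝ :=
  (((j : ℕ) : ℝ) - ((i : ℕ) : ℝ)) * (((k : ℕ) : ℝ) - ((j : ℕ) : ℝ))
    * (((k : ℕ) : ℝ) - ((i : ℕ) : ℝ)) / 2

/-- Partial derivative with respect to the `i`-th coordinate of a real-valued function
of `A`. -/
noncomputable def pd {N : ℕ} (i : Fin N) (g : (Fin N → ℝ) → ℝ) (A : Fin N → ℝ) : ℝ :=
  fderiv ℝ g A (Pi.single i 1)

/-!
Write `γ̃ = M + α² A Aᵀ` and `ρ̃ = M / Z` with `M^i_k = δ^i_k − α ε^{ilk} A_l` and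
`Z = 1 + α² |A|²`. As `ε` is antisymmetric, `M` fixes `A` from both sides, so `γ̃ A = Z A`, which
absorbs the derivative of `1 / Z`. What is left is a contraction of `γ̃` and `M` against `ε`,
which `ε^{lij} ε^{lab} = δ^{ia} δ^{jb} − δ^{ib} δ^{ja}` reduces to `α (δ^{ji} A_a − A_j M^i_a)`;
being a polynomial identity over three indices, it is checked componentwise.
-/

section PartialDerivative

variable {N : ℕ} {f g : (Fin N → ℝ) → ℝ} {A : Fin N → ℝ} {i : Fin N}

theorem pd_const (c : ℝ) : pd i (fun _ => c) A = 0 := by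
  simp [pd]

theorem pd_apply (k : Fin N) : pd i (fun B => B k) A = if k = i then 1 else 0 := by
  rw [pd, fderiv_apply differentiableAt_id k]
  simp [Pi.single_apply]

theorem pd_add (hf : DifferentiableAt ℝ f A) (hg : DifferentiableAt ℝ g A) :
    pd i (fun B => f B + g B) A = pd i f A + pd i g A := by
  simp [pd, fderiv_fun_add hf hg]

theorem pd_sub (hf : DifferentiableAt ℝ f A) (hg : DifferentiableAt ℝ g A) :
    pd i (fun B => f B - g B) A = pd i f A - pd i g A := by
  simp [pd, fderiv_fun_sub hf hg]

theorem pd_mul (hf : DifferentiableAt ℝ f A) (hg : DifferentiableAt ℝ g A) :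
    pd i (fun B => f B * g B) A = pd i f A * g A + f A * pd i g A := by
  simp [pd, fderiv_fun_mul hf hg]; ring

theorem pd_sum {ι : Type*} (s : Finset ι) {F : ι → (Fin N → ℝ) → ℝ}
    (hF : ∀ k ∈ s, DifferentiableAt ℝ (F k) A) :
    pd i (fun B => ∑ k ∈ s, F k B) A = ∑ k ∈ s, pd i (F k) A := by
  simp [pd, fderiv_fun_sum hF]

theorem pd_inv (hf : DifferentiableAt ℝ f A) (hA : f A ≠ 0) :
    pd i (fun B => (f B)⁻¹) A = -pd i f A / f A ^ 2 := by
  have h : HasFDerivAt (fun B => (f B)⁻¹) _ A := (hasFDerivAt_inv hA).comp A hf.hasFDerivAt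
  rw [pd, h.fderiv]
  simp [pd, div_eq_mul_inv]

end PartialDerivative

noncomputable def su2Lin (α : ℝ) (A : Fin 3 → ℝ) (i k : Fin 3) : ℝ :=
  (if i = k then 1 else 0) - α * ∑ l, levicivita i l k * A l

noncomputable def su2Denom (α : ℝ) (A : Fin 3 → ℝ) : ℝ :=
  1 + α ^ 2 * ((A 0) ^ 2 + (A 1) ^ 2 + (A 2) ^ 2)

noncomputable def su2Gamma (α : ℝ) (A : Fin 3 → ℝ) (i k : Fin 3) : ℝ :=
  su2Lin α A i k + α ^ 2 * A i * A k

noncomputable def su2Rho (α : ℝ) (A : Fin 3 → ℝ) (i a : Fin 3) : ℝ :=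
  1 / su2Denom α A * su2Lin α A i a

section SU2

variable (α : ℝ) (A : Fin 3 → ℝ)

theorem su2Denom_pos : 0 < su2Denom α A := by
  unfold su2Denom; positivity

@[fun_prop]
theorem differentiable_su2Lin (i k : Fin 3) : Differentiable ℝ (fun B => su2Lin α B i k) := by
  unfold su2Lin; fun_prop

@[fun_prop]
theorem differentiable_su2Denom : Differentiable ℝ (su2Denom α) := by
  unfold su2Denom; fun_prop

theorem pd_su2Lin (i a l : Fin 3) :
    pd l (fun B => su2Lin α B i a) A = -α * levicivita i l a := by
  unfold su2Lin
  simp (disch := fun_prop) only [pd_sub, pd_const, pd_mul, pd_sum, pd_apply]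
  simp

theorem pd_su2Denom (l : Fin 3) : pd l (su2Denom α) A = 2 * α ^ 2 * A l := by
  unfold su2Denom
  simp (disch := fun_prop) only [pd_add, pd_const, pd_mul, pd_apply, pow_two]
  fin_cases l <;> simp <;> ring

theorem pd_su2Gamma (i j l : Fin 3) :
    pd i (fun B => su2Gamma α B j l) A =
      -α * levicivita j i l + α ^ 2 * ((if j = i then A l else 0) + (if l = i then A j else 0)) := by
  unfold su2Gamma
  simp (disch := fun_prop) only [pd_add, pd_mul, pd_const, pd_apply, pd_su2Lin]
  split_ifs <;> ring

theorem pd_su2Rho (i a l : Fin 3) :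
    pd l (fun B => su2Rho α B i a) A =
      -(α * levicivita i l a + 2 * α ^ 2 * A l * su2Rho α A i a) / su2Denom α A := by
  have hD := (su2Denom_pos α A).ne'
  unfold su2Rho
  simp only [one_div]
  rw [pd_mul (by fun_prop) (by fun_prop), pd_inv (by fun_prop) hD, pd_su2Denom, pd_su2Lin]
  field_simp
  ring

theorem sum_su2Lin_mul_self (j : Fin 3) : ∑ l, su2Lin α A j l * A l = A j := by
  fin_cases j <;> simp [su2Lin, Fin.sum_univ_three, levicivita] <;> ring

theorem sum_self_mul_su2Lin (a : Fin 3) : ∑ l, A l * su2Lin α A l a = A a := by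
  fin_cases a <;> simp [su2Lin, Fin.sum_univ_three, levicivita] <;> ring

theorem sum_su2Gamma_mul_self (j : Fin 3) : ∑ l, su2Gamma α A j l * A l = su2Denom α A * A j := by
  simp only [su2Gamma, add_mul, Finset.sum_add_distrib, sum_su2Lin_mul_self]
  simp only [Fin.sum_univ_three, su2Denom]
  ring

theorem sum_su2Gamma_levicivita_add_su2Lin_levicivita (i j a : Fin 3) :
    ∑ l, (su2Gamma α A j l * levicivita i l a + su2Lin α A l a * levicivita j i l) =
      α * ((if j = i then A a else 0) - A j * su2Lin α A i a) := by
  fin_cases i <;> fin_cases j <;> fin_cases a <;>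
    simp [su2Gamma, su2Lin, Fin.sum_univ_three, levicivita] <;> ring

theorem su2_second_master_equation (i j a : Fin 3) :
    ∑ l, (su2Gamma α A j l * pd l (fun B => su2Rho α B i a) A
      + su2Rho α A l a * pd i (fun B => su2Gamma α B j l) A) = 0 := by
  have hD := (su2Denom_pos α A).ne'
  simp only [pd_su2Rho, pd_su2Gamma]
  calc _ = ∑ l, (-(2 * α ^ 2 * su2Rho α A i a / su2Denom α A) * (su2Gamma α A j l * A l)
        + -(α / su2Denom α A) * (su2Gamma α A j l * levicivita i l a
          + su2Lin α A l a * levicivita j i l)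
        + (if j = i then α ^ 2 / su2Denom α A else 0) * (A l * su2Lin α A l a)
        + α ^ 2 * A j * (if l = i then su2Rho α A l a else 0)) := by
        refine Finset.sum_congr rfl fun l _ => ?_
        unfold su2Rho
        split_ifs <;> field_simp <;> ring
    _ = 0 := by
      rw [Finset.sum_add_distrib, Finset.sum_add_distrib, Finset.sum_add_distrib]
      simp only [← Finset.mul_sum]
      rw [sum_su2Gamma_mul_self, sum_su2Gamma_levicivita_add_su2Lin_levicivita,
        sum_self_mul_su2Lin, Fintype.sum_ite_eq']
      unfold su2Rho
      split_ifs <;> field_simp <;> ring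

end SU2

/-- The alternative su(2) solutions
`γ̃^i_k(A) = δ^i_k − α Σ_l ε^{ilk} A_l + α² A_i A_k` and
`ρ̃^i_a(A) = (1/(1 + α² Z₁))(δ^i_a − α Σ_k ε^{ika} A_k)` (with `Z₁ = A₁² + A₂² + A₃²`)
satisfy the second master equation
`Σ_l (γ̃^j_l ∂^l_A ρ̃^i_a + ρ̃^l_a ∂^i_A γ̃^j_l) = 0` at every `A ∈ ℝ³`. -/
theorem su2_alternative_rho_second_master (α : ℝ)
    (γt : (Fin 3 → ℝ) → Fin 3 → Fin 3 → ℝ)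
    (hγt : ∀ A i k, γt A i k = (if i = k then 1 else 0)
        - α * ∑ l, levicivita i l k * A l + α ^ 2 * A i * A k)
    (ρt : (Fin 3 → ℝ) → Fin 3 → Fin 3 → ℝ)
    (hρt : ∀ A i a, ρt A i a = (1 / (1 + α ^ 2 * ((A 0) ^ 2 + (A 1) ^ 2 + (A 2) ^ 2)))
        * ((if i = a then 1 else 0) - α * ∑ k, levicivita i k a * A k)) :
    ∀ A : Fin 3 → ℝ, ∀ i j a,
      ∑ l, (γt A j l * pd l (fun B => ρt B i a) A + ρt A l a * pd i (fun B => γt B j l) A)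
        = 0 := by
  obtain rfl : γt = su2Gamma α := funext₃ hγt
  obtain rfl : ρt = su2Rho α := funext₃ hρt
  exact su2_second_master_equation α
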